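/- arXiv:1809.00936 — 2 statements merged into one kernel-verified Lean document; each statement's English description precedes it below -/
import Mathlib

section
/- In X = ℝ with Y = (-3,3), the transportation-annihilation pre-distance W⁰_p fails the triangle inequality: for μ = δ_{-2}, ν = δ_2, ξ = 0 (the zero measure), W⁰_p(μ,ν) = 4 while W⁰_p(μ,ξ) + W⁰_p(ξ,ν) = 2. -/
open MeasureTheory Metric Set
open scoped ENNReal NNReal

/-- `d*(x,y) := inf_{z ∈ X \ Y} (d(x,z) + d(z,y))`. -/
noncomputable def dstar {X : Type*} [MetricSpace X] (Y : Set X) (x y : X) : ℝ :=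
  ⨅ z : (Yᶜ : Set X), (dist x (z : X) + dist (z : X) y)

/-- Couplings of two measures. -/
def Cpl {α : Type*} [MeasurableSpace α] (μ ν : Measure α) : Set (Measure (α × α)) :=
  {q | q.map Prod.fst = μ ∧ q.map Prod.snd = ν}

/-- `p`-transportation cost of a plan `q` with respect to a cost function `c`. -/
noncomputable def tcost {α : Type*} [MeasurableSpace α] (c : α → α → ℝ) (p : ℝ)
    (q : Measure (α × α)) : ℝ≥0∞ :=
  ∫⁻ z, ENNReal.ofReal (c z.1 z.2 ^ p) ∂q

/-- The `L^p`-transportation distance `W̃_p` between charged (sub)probability measures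
`σ = (σ⁺,σ⁻)` and `τ = (τ⁺,τ⁻)`: infimum over decomposed couplings `q^{++},q^{+-},q^{-+},q^{--}`
with the appropriate marginals, transporting like charges at cost `d` and opposite charges at
cost `d*`. -/
noncomputable def Wtilde {X : Type*} [MetricSpace X] [MeasurableSpace X] (Y : Set X) (p : ℝ)
    (σ τ : Measure X × Measure X) : ℝ≥0∞ :=
  (⨅ Q : {Q : Measure (X × X) × Measure (X × X) × Measure (X × X) × Measure (X × X) //
        (Q.1 + Q.2.1).map Prod.fst = σ.1 ∧ (Q.2.2.1 + Q.2.2.2).map Prod.fst = σ.2 ∧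
        (Q.1 + Q.2.2.1).map Prod.snd = τ.1 ∧ (Q.2.1 + Q.2.2.2).map Prod.snd = τ.2},
      tcost (fun x y => dist x y) p Q.1.1 + tcost (dstar Y) p Q.1.2.1 +
        tcost (dstar Y) p Q.1.2.2.1 + tcost (fun x y => dist x y) p Q.1.2.2.2) ^ (1/p)

/-- The transportation-annihilation pre-distance `W⁰_p` between subprobabilities on `Y`. -/
noncomputable def W0 {X : Type*} [MetricSpace X] [MeasurableSpace X] (Y : Set X) (p : ℝ)
    (μ ν : Measure X) : ℝ≥0∞ :=
  ⨅ re : {re : Measure X × Measure X //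
      (μ + (2 : ℝ≥0∞) • re.1) Set.univ = 1 ∧ (ν + (2 : ℝ≥0∞) • re.2) Set.univ = 1},
    Wtilde Y p (μ + re.1.1, re.1.1) (ν + re.1.2, re.1.2)

/-!
Unit mass forces the auxiliary measures `ρ, η` to vanish for a Dirac mass, so `W⁰_p(δ₋₂, δ₂)` is
the plain transport cost `|-2 - 2| = 4`. Against the zero measure, `δ₋₂` has to be matched with a
measure `η` of mass `1/2` that carries both charges: the positive copy is reached at cost `d`, the
negative one at cost `d*`, and `d(-2, y) + d*(-2, y) ≥ 2 d(-2, Yᶜ) = 2` for every `y`. By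
convexity of `t ↦ t ^ p` the total cost is at least `1`, which `η = δ₋₃ / 2` attains. The case
of `δ₂` follows from the symmetry of `W⁰_p`.
-/

lemma ENNReal.two_mul_rpow_le_rpow_add_rpow {r u v : ℝ≥0∞} (h : 2 * r ≤ u + v) {p : ℝ}
    (hp : 1 ≤ p) : 2 * r ^ p ≤ u ^ p + v ^ p := by
  have hr : r ≤ 2⁻¹ * u + 2⁻¹ * v := by
    rw [← mul_add, ← ENNReal.mul_le_iff_le_inv two_ne_zero ENNReal.ofNat_ne_top]
    exact h
  have hmean := ENNReal.rpow_arith_mean_le_arith_mean2_rpow 2⁻¹ 2⁻¹ u v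
    ENNReal.inv_two_add_inv_two hp
  rw [ENNReal.mul_le_iff_le_inv two_ne_zero ENNReal.ofNat_ne_top, mul_add]
  exact (ENNReal.rpow_le_rpow hr (by linarith)).trans hmean

lemma ENNReal.rpow_rpow_one_div {p : ℝ} (hp : p ≠ 0) (x : ℝ≥0∞) : (x ^ p) ^ (1 / p) = x := by
  rw [one_div, ENNReal.rpow_rpow_inv hp]

lemma ENNReal.ofReal_eq_ofReal_rpow_rpow_one_div {d p : ℝ} (hd : 0 ≤ d) (hp : 0 < p) :
    ENNReal.ofReal d = ENNReal.ofReal (d ^ p) ^ (1 / p) := by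
  rw [← ENNReal.ofReal_rpow_of_nonneg hd hp.le, ENNReal.rpow_rpow_one_div hp.ne']

section Dstar

variable {X : Type*} [MetricSpace X] {Y : Set X}

lemma dstar_nonneg (x y : X) : 0 ≤ dstar Y x y :=
  Real.iInf_nonneg fun _ => by positivity

lemma dstar_le_dist_add_dist {z : X} (hz : z ∉ Y) (x y : X) :
    dstar Y x y ≤ dist x z + dist z y :=
  ciInf_le ⟨0, by rintro t ⟨w, rfl⟩; positivity⟩ (⟨z, hz⟩ : (Yᶜ : Set X))

lemma dstar_le_dist {z : X} (hz : z ∉ Y) (x : X) : dstar Y x z ≤ dist x z := by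
  simpa using dstar_le_dist_add_dist hz x z

lemma dstar_comm (x y : X) : dstar Y x y = dstar Y y x := by
  simp only [dstar, dist_comm x, dist_comm _ y, add_comm]

lemma two_mul_dist_le_dist_add_dstar {a z : X} (hz : z ∉ Y)
    (hmin : ∀ w ∉ Y, dist a z ≤ dist a w) (x : X) : 2 * dist a z ≤ dist a x + dstar Y a x := by
  have : Nonempty (Yᶜ : Set X) := ⟨⟨z, hz⟩⟩
  have h : 2 * dist a z - dist a x ≤ dstar Y a x := by
    refine le_ciInf fun w => ?_
    have := hmin w w.2
    have := dist_triangle_right a (w : X) x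
    linarith
  linarith

lemma two_mul_ofReal_rpow_le {a z : X} (hz : z ∉ Y) (hmin : ∀ w ∉ Y, dist a z ≤ dist a w)
    {p : ℝ} (hp : 1 ≤ p) (x : X) :
    2 * ENNReal.ofReal (dist a z ^ p) ≤
      ENNReal.ofReal (dist a x ^ p) + ENNReal.ofReal (dstar Y a x ^ p) := by
  have hp₀ : 0 ≤ p := by linarith
  rw [← ENNReal.ofReal_rpow_of_nonneg dist_nonneg hp₀,
    ← ENNReal.ofReal_rpow_of_nonneg dist_nonneg hp₀,
    ← ENNReal.ofReal_rpow_of_nonneg (dstar_nonneg a x) hp₀]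
  refine ENNReal.two_mul_rpow_le_rpow_add_rpow ?_ hp
  rw [← ENNReal.ofReal_ofNat 2, ← ENNReal.ofReal_mul zero_le_two,
    ← ENNReal.ofReal_add dist_nonneg (dstar_nonneg a x)]
  exact ENNReal.ofReal_le_ofReal (two_mul_dist_le_dist_add_dstar hz hmin x)

end Dstar

section Measures

variable {X Z : Type*} [MeasurableSpace X] [MeasurableSpace Z]

lemma MeasureTheory.Measure.eq_zero_of_add_eq_zero {q q' : Measure X} (h : q + q' = 0) :
    q = 0 := by
  rw [← Measure.measure_univ_eq_zero] at h ⊢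
  simp only [Measure.add_apply, add_eq_zero] at h
  exact h.1

lemma MeasureTheory.Measure.eq_zero_of_map_add_eq_zero {q q' : Measure Z} {f : Z → X}
    (hf : Measurable f) (h : (q + q').map f = 0) : q = 0 :=
  eq_zero_of_add_eq_zero ((Measure.map_eq_zero_iff hf.aemeasurable).mp h)

lemma ae_eq_of_map_add_eq_dirac [MeasurableSingletonClass X] {q q' : Measure Z} {f : Z → X}
    {a : X} (hf : Measurable f) (h : (q + q').map f = Measure.dirac a) : ∀ᵐ z ∂q, f z = a := by
  have h_map : ∀ᵐ x ∂(q + q').map f, x = a := by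
    rw [h, ae_dirac_eq]
    exact Filter.eventually_pure.mpr rfl
  exact (ae_add_measure_iff.mp (ae_of_ae_map hf.aemeasurable h_map)).1

lemma lintegral_map_snd_le_of_ae_fst_eq {q : Measure (X × Z)} {a : X} (h : ∀ᵐ z ∂q, z.1 = a)
    (c : X → Z → ℝ≥0∞) : ∫⁻ y, c a y ∂q.map Prod.snd ≤ ∫⁻ z, c z.1 z.2 ∂q :=
  calc ∫⁻ y, c a y ∂q.map Prod.snd ≤ ∫⁻ z, c a z.2 ∂q := lintegral_map_le _ _
    _ = ∫⁻ z, c z.1 z.2 ∂q := lintegral_congr_ae (h.mono fun z hz => by simp only [hz])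

lemma eq_zero_of_add_two_smul_measure_univ {μ ρ : Measure X} [IsProbabilityMeasure μ]
    (h : (μ + (2 : ℝ≥0∞) • ρ) Set.univ = 1) : ρ = 0 := by
  simpa [measure_univ] using h

lemma measure_univ_eq_inv_two {ρ : Measure X} (h : (0 + (2 : ℝ≥0∞) • ρ) Set.univ = 1) :
    ρ Set.univ = 2⁻¹ := by
  simp only [zero_add, Measure.smul_apply, smul_eq_mul] at h
  exact ENNReal.eq_inv_of_mul_eq_one_left (by rwa [mul_comm] at h)

lemma tcost_zero (c : X → X → ℝ) (p : ℝ) : tcost c p 0 = 0 :=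
  lintegral_zero_measure _

lemma tcost_smul_dirac [MeasurableSingletonClass X] (c : X → X → ℝ) (p : ℝ) (k : ℝ≥0∞)
    (x y : X) : tcost c p (k • Measure.dirac (x, y)) = k * ENNReal.ofReal (c x y ^ p) := by
  rw [tcost, lintegral_smul_measure, lintegral_dirac, smul_eq_mul]

lemma tcost_map_swap {c : X → X → ℝ} (hc : ∀ x y, c x y = c y x) (p : ℝ)
    (q : Measure (X × X)) : tcost c p (q.map Prod.swap) = tcost c p q := by
  refine (lintegral_map_equiv _ MeasurableEquiv.prodComm).trans (lintegral_congr fun z => ?_)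
  rw [hc]
  rfl

lemma map_fst_map_swap_add (q q' : Measure (X × X)) :
    (q.map Prod.swap + q'.map Prod.swap).map Prod.fst = (q + q').map Prod.snd := by
  rw [← Measure.map_add _ _ measurable_swap, Measure.map_map measurable_fst measurable_swap]
  rfl

lemma map_snd_map_swap_add (q q' : Measure (X × X)) :
    (q.map Prod.swap + q'.map Prod.swap).map Prod.snd = (q + q').map Prod.fst := by
  rw [← Measure.map_add _ _ measurable_swap, Measure.map_map measurable_snd measurable_swap]
  rfl

end Measures

section ChargedPlans

variable {X : Type*} [MeasurableSpace X] {σ τ : Measure X × Measure X}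

/-- `Q = (q⁺⁺, q⁺⁻, q⁻⁺, q⁻⁻)` is admissible in the infimum defining `Wtilde Y p σ τ`. -/
def IsChargedPlan (σ τ : Measure X × Measure X)
    (Q : Measure (X × X) × Measure (X × X) × Measure (X × X) × Measure (X × X)) : Prop :=
  (Q.1 + Q.2.1).map Prod.fst = σ.1 ∧ (Q.2.2.1 + Q.2.2.2).map Prod.fst = σ.2 ∧
    (Q.1 + Q.2.2.1).map Prod.snd = τ.1 ∧ (Q.2.1 + Q.2.2.2).map Prod.snd = τ.2

noncomputable def swapPlan
    (Q : Measure (X × X) × Measure (X × X) × Measure (X × X) × Measure (X × X)) :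
    Measure (X × X) × Measure (X × X) × Measure (X × X) × Measure (X × X) :=
  (Q.1.map Prod.swap, Q.2.2.1.map Prod.swap, Q.2.1.map Prod.swap, Q.2.2.2.map Prod.swap)

lemma IsChargedPlan.swapPlan {Q} (hQ : IsChargedPlan σ τ Q) :
    IsChargedPlan τ σ (swapPlan Q) := by
  obtain ⟨h₁, h₂, h₃, h₄⟩ := hQ
  exact ⟨(map_fst_map_swap_add _ _).trans h₃, (map_fst_map_swap_add _ _).trans h₄,
    (map_snd_map_swap_add _ _).trans h₁, (map_snd_map_swap_add _ _).trans h₂⟩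

end ChargedPlans

section Wtilde

variable {X : Type*} [MetricSpace X] [MeasurableSpace X] {Y : Set X} {p : ℝ}
  {σ τ : Measure X × Measure X}

noncomputable def chargedCost (Y : Set X) (p : ℝ)
    (Q : Measure (X × X) × Measure (X × X) × Measure (X × X) × Measure (X × X)) : ℝ≥0∞ :=
  tcost (fun x y => dist x y) p Q.1 + tcost (dstar Y) p Q.2.1 + tcost (dstar Y) p Q.2.2.1 +
    tcost (fun x y => dist x y) p Q.2.2.2

lemma Wtilde_eq_iInf_chargedCost :
    Wtilde Y p σ τ = (⨅ Q : {Q // IsChargedPlan σ τ Q}, chargedCost Y p Q.1) ^ (1 / p) :=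
  rfl

lemma Wtilde_le_chargedCost_rpow (hp : 0 ≤ p) {Q} (hQ : IsChargedPlan σ τ Q) :
    Wtilde Y p σ τ ≤ chargedCost Y p Q ^ (1 / p) :=
  ENNReal.rpow_le_rpow (iInf_le_of_le ⟨Q, hQ⟩ le_rfl) (by positivity)

lemma rpow_le_Wtilde (hp : 0 ≤ p) {c : ℝ≥0∞}
    (h : ∀ Q, IsChargedPlan σ τ Q → c ≤ chargedCost Y p Q) : c ^ (1 / p) ≤ Wtilde Y p σ τ :=
  ENNReal.rpow_le_rpow (le_iInf fun Q => h Q.1 Q.2) (by positivity)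

lemma chargedCost_swapPlan (Q) : chargedCost Y p (swapPlan Q) = chargedCost Y p Q := by
  simp only [chargedCost, swapPlan, tcost_map_swap dist_comm, tcost_map_swap dstar_comm]
  ring

lemma Wtilde_comm : Wtilde Y p σ τ = Wtilde Y p τ σ := by
  have key : ∀ σ τ : Measure X × Measure X,
      (⨅ Q : {Q // IsChargedPlan τ σ Q}, chargedCost Y p Q.1) ≤
        ⨅ Q : {Q // IsChargedPlan σ τ Q}, chargedCost Y p Q.1 := fun σ τ =>
    le_iInf fun Q => iInf_le_of_le ⟨swapPlan Q.1, Q.2.swapPlan⟩ (chargedCost_swapPlan _).le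
  rw [Wtilde_eq_iInf_chargedCost, Wtilde_eq_iInf_chargedCost, le_antisymm (key σ τ) (key τ σ)]

lemma lintegral_add_lintegral_le_chargedCost [MeasurableSingletonClass X] {a : X} {Q}
    (hQ : IsChargedPlan (Measure.dirac a, 0) τ Q) :
    ∫⁻ y, ENNReal.ofReal (dist a y ^ p) ∂τ.1 + ∫⁻ y, ENNReal.ofReal (dstar Y a y ^ p) ∂τ.2 ≤
      chargedCost Y p Q := by
  obtain ⟨q₁, q₂, q₃, q₄⟩ := Q
  obtain ⟨h₁, h₂, h₃, h₄⟩ := hQ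
  have hq₃ : q₃ = 0 := Measure.eq_zero_of_map_add_eq_zero measurable_fst h₂
  have hq₄ : q₄ = 0 := Measure.eq_zero_of_map_add_eq_zero measurable_fst (add_comm q₃ q₄ ▸ h₂)
  subst hq₃ hq₄
  have ae₁ : ∀ᵐ z ∂q₁, z.1 = a := ae_eq_of_map_add_eq_dirac measurable_fst h₁
  have ae₂ : ∀ᵐ z ∂q₂, z.1 = a := ae_eq_of_map_add_eq_dirac measurable_fst (add_comm q₁ q₂ ▸ h₁)
  rw [← h₃, ← h₄, add_zero, add_zero, chargedCost, tcost_zero, tcost_zero, add_zero, add_zero]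
  exact add_le_add
    (lintegral_map_snd_le_of_ae_fst_eq ae₁ fun x y => ENNReal.ofReal (dist x y ^ p))
    (lintegral_map_snd_le_of_ae_fst_eq ae₂ fun x y => ENNReal.ofReal (dstar Y x y ^ p))

end Wtilde

section W0

variable {X : Type*} [MetricSpace X] [MeasurableSpace X] {Y : Set X} {p : ℝ} {μ ν : Measure X}

lemma W0_le_Wtilde {ρ η : Measure X} (hρ : (μ + (2 : ℝ≥0∞) • ρ) Set.univ = 1)
    (hη : (ν + (2 : ℝ≥0∞) • η) Set.univ = 1) :
    W0 Y p μ ν ≤ Wtilde Y p (μ + ρ, ρ) (ν + η, η) :=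
  iInf_le_of_le ⟨(ρ, η), hρ, hη⟩ le_rfl

lemma le_W0 {c : ℝ≥0∞} (h : ∀ ρ η : Measure X, (μ + (2 : ℝ≥0∞) • ρ) Set.univ = 1 →
      (ν + (2 : ℝ≥0∞) • η) Set.univ = 1 → c ≤ Wtilde Y p (μ + ρ, ρ) (ν + η, η)) :
    c ≤ W0 Y p μ ν :=
  le_iInf fun re => h _ _ re.2.1 re.2.2

lemma W0_comm : W0 Y p μ ν = W0 Y p ν μ := by
  have key : ∀ μ ν : Measure X, W0 Y p ν μ ≤ W0 Y p μ ν := fun μ ν =>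
    le_W0 fun _ _ hρ hη => (W0_le_Wtilde hη hρ).trans_eq Wtilde_comm
  exact le_antisymm (key ν μ) (key μ ν)

theorem W0_dirac_dirac [MeasurableSingletonClass X] (hp : 0 < p) (a b : X) :
    W0 Y p (Measure.dirac a) (Measure.dirac b) = ENNReal.ofReal (dist a b) := by
  rw [ENNReal.ofReal_eq_ofReal_rpow_rpow_one_div dist_nonneg hp]
  apply le_antisymm
  · have hQ : IsChargedPlan (Measure.dirac a + 0, 0) (Measure.dirac b + 0, 0)
        (Measure.dirac (a, b), 0, 0, 0) := by
      simp [IsChargedPlan, Measure.map_dirac', measurable_fst, measurable_snd]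
    refine (W0_le_Wtilde (by simp) (by simp)).trans
      ((Wtilde_le_chargedCost_rpow hp.le hQ).trans_eq ?_)
    simp [chargedCost, tcost, lintegral_dirac]
  · refine le_W0 fun ρ η hρ hη => ?_
    obtain rfl := eq_zero_of_add_two_smul_measure_univ hρ
    obtain rfl := eq_zero_of_add_two_smul_measure_univ hη
    refine rpow_le_Wtilde hp.le fun Q hQ => ?_
    rw [add_zero, add_zero] at hQ
    simpa [lintegral_dirac] using lintegral_add_lintegral_le_chargedCost (Y := Y) (p := p) hQ

lemma W0_dirac_zero_le [MeasurableSingletonClass X] (hp : 0 < p) {a z : X} (hz : z ∉ Y) :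
    W0 Y p (Measure.dirac a) 0 ≤ ENNReal.ofReal (dist a z) := by
  have hQ : IsChargedPlan (Measure.dirac a + 0, 0)
      (0 + (2⁻¹ : ℝ≥0∞) • Measure.dirac z, (2⁻¹ : ℝ≥0∞) • Measure.dirac z)
      ((2⁻¹ : ℝ≥0∞) • Measure.dirac (a, z), (2⁻¹ : ℝ≥0∞) • Measure.dirac (a, z), 0, 0) := by
    simp only [IsChargedPlan, ← add_smul, ENNReal.inv_two_add_inv_two, one_smul]
    simp [Measure.map_dirac', measurable_fst, measurable_snd, Measure.map_smul]
  rw [ENNReal.ofReal_eq_ofReal_rpow_rpow_one_div dist_nonneg hp]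
  refine (W0_le_Wtilde (by simp) (by simp [smul_smul, ENNReal.mul_inv_cancel])).trans
    ((Wtilde_le_chargedCost_rpow hp.le hQ).trans (ENNReal.rpow_le_rpow ?_ (by positivity)))
  have hdstar : ENNReal.ofReal (dstar Y a z ^ p) ≤ ENNReal.ofReal (dist a z ^ p) :=
    ENNReal.ofReal_le_ofReal (Real.rpow_le_rpow (dstar_nonneg a z) (dstar_le_dist hz a) hp.le)
  calc chargedCost Y p _
      = 2⁻¹ * ENNReal.ofReal (dist a z ^ p) + 2⁻¹ * ENNReal.ofReal (dstar Y a z ^ p) := by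
        simp [chargedCost, tcost_smul_dirac, tcost_zero]
    _ ≤ 2⁻¹ * ENNReal.ofReal (dist a z ^ p) + 2⁻¹ * ENNReal.ofReal (dist a z ^ p) := by
        gcongr
    _ = ENNReal.ofReal (dist a z ^ p) := by
        rw [← add_mul, ENNReal.inv_two_add_inv_two, one_mul]

lemma le_W0_dirac_zero [OpensMeasurableSpace X] (hp : 1 ≤ p) {a z : X} (hz : z ∉ Y)
    (hmin : ∀ w ∉ Y, dist a z ≤ dist a w) :
    ENNReal.ofReal (dist a z) ≤ W0 Y p (Measure.dirac a) 0 := by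
  have hp₀ : 0 < p := by linarith
  rw [ENNReal.ofReal_eq_ofReal_rpow_rpow_one_div dist_nonneg hp₀]
  refine le_W0 fun ρ η hρ hη => ?_
  obtain rfl := eq_zero_of_add_two_smul_measure_univ hρ
  have hη_univ := measure_univ_eq_inv_two hη
  refine rpow_le_Wtilde hp₀.le fun Q hQ => ?_
  rw [add_zero, zero_add] at hQ
  refine le_trans ?_ (lintegral_add_lintegral_le_chargedCost hQ)
  have h_meas : Measurable fun y => ENNReal.ofReal (dist a y ^ p) := by fun_prop
  calc ENNReal.ofReal (dist a z ^ p) = ∫⁻ _, 2 * ENNReal.ofReal (dist a z ^ p) ∂η := by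
        rw [lintegral_const, hη_univ, mul_comm 2, mul_assoc,
          ENNReal.mul_inv_cancel two_ne_zero ENNReal.ofNat_ne_top, mul_one]
    _ ≤ ∫⁻ y, ENNReal.ofReal (dist a y ^ p) + ENNReal.ofReal (dstar Y a y ^ p) ∂η :=
        lintegral_mono (two_mul_ofReal_rpow_le hz hmin hp)
    _ = _ := lintegral_add_left h_meas _

theorem W0_dirac_zero [OpensMeasurableSpace X] (hp : 1 ≤ p) {a z : X} (hz : z ∉ Y)
    (hmin : ∀ w ∉ Y, dist a z ≤ dist a w) :
    W0 Y p (Measure.dirac a) 0 = ENNReal.ofReal (dist a z) :=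
  le_antisymm (W0_dirac_zero_le (by linarith) hz) (le_W0_dirac_zero hp hz hmin)

end W0

/-- in `X = ℝ`, `Y = (-3,3)`, with `μ = δ_{-2}`, `ν = δ_2`, `ξ = 0`,
the pre-distance `W⁰_p` fails the triangle inequality: `W⁰_p(μ,ν) = 4` while
`W⁰_p(μ,ξ) + W⁰_p(ξ,ν) = 2`. -/
theorem W0_no_triangle (p : ℝ) (hp : 1 ≤ p) :
    W0 (Set.Ioo (-3 : ℝ) 3) p (Measure.dirac (-2)) (Measure.dirac 2) = 4 ∧
    W0 (Set.Ioo (-3 : ℝ) 3) p (Measure.dirac (-2)) 0 +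
      W0 (Set.Ioo (-3 : ℝ) 3) p 0 (Measure.dirac 2) = 2 := by
  have h_left : W0 (Set.Ioo (-3 : ℝ) 3) p (Measure.dirac (-2)) 0 = 1 := by
    rw [W0_dirac_zero hp (z := -3) (by simp)]
    · norm_num [Real.dist_eq]
    · intro w hw
      simp only [Set.mem_Ioo, not_and_or, not_lt, Real.dist_eq] at hw ⊢
      grind
  have h_right : W0 (Set.Ioo (-3 : ℝ) 3) p 0 (Measure.dirac 2) = 1 := by
    rw [W0_comm, W0_dirac_zero hp (z := 3) (by simp)]
    · norm_num [Real.dist_eq]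
    · intro w hw
      simp only [Set.mem_Ioo, not_and_or, not_lt, Real.dist_eq] at hw ⊢
      grind
  refine ⟨?_, by rw [h_left, h_right]; norm_num⟩
  rw [W0_dirac_dirac (by linarith)]
  norm_num [Real.dist_eq]
end

section
/- For X = ℝ, Y = (-3,3), μ = δ_{-2}, ν = δ_2 and p > 1: W'_p(μ,ν)^p = 2^p while W''_p(μ,ν)^p ≤ 2, where W''_p(μ,ν) := inf{ W_p(μ̌,ν̌) : μ̌,ν̌ finite measures on Y' with μ̌|_Y = μ, ν̌|_Y = ν }. In particular W'_p ≠ W''_p for p > 1. -/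
open MeasureTheory Metric Set
open scoped ENNReal NNReal

/-- Measurable structure on `Option α ≃ α ⊕ Unit`. -/
instance {α : Type*} [MeasurableSpace α] : MeasurableSpace (Option α) :=
  MeasurableSpace.comap (Equiv.optionEquivSumPUnit.{_, _} α) (inferInstance :
    MeasurableSpace (α ⊕ PUnit.{1}))

/-- The shortcut metric `d'` on `Y' = Y ∪ {∂}` (modelled as `Option X`, `none = ∂`):
`d'(x,y) = min (d x y) (d'(x,∂) + d'(y,∂))`, `d'(x,∂) = inf_{z ∈ X\Y} d(x,z)`. -/
noncomputable def shortcut {X : Type*} [MetricSpace X] (Y : Set X) :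
    Option X → Option X → ℝ
  | some x, some y => min (dist x y) (infDist x Yᶜ + infDist y Yᶜ)
  | some x, none => infDist x Yᶜ
  | none, some y => infDist y Yᶜ
  | none, none => 0

/-- Extension of a subprobability on `Y ⊆ X` to a probability on `Y' = Y ∪ {∂}`
by putting the missing mass at `∂`. -/
noncomputable def toProb {X : Type*} [MeasurableSpace X] (μ : Measure X) :
    Measure (Option X) :=
  μ.map some + (1 - μ Set.univ) • Measure.dirac none

/-- The Kantorovich-Wasserstein distance `W'_p` on subprobabilities over `Y`,
induced by the shortcut metric `d'` on `Y' = Y ∪ {∂}`. -/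
noncomputable def Wprime {X : Type*} [MetricSpace X] [MeasurableSpace X] (Y : Set X) (p : ℝ)
    (μ ν : Measure X) : ℝ≥0∞ :=
  (⨅ q : Cpl (toProb μ) (toProb ν),
      ∫⁻ z, ENNReal.ofReal (shortcut Y z.1 z.2 ^ p) ∂q.1) ^ (1/p)

/-- Wasserstein-type transportation cost on `Y' = Y ∪ {∂}` (modelled as `Option X`)
for the shortcut metric `d'`, between measures on `Y'`. -/
noncomputable def WOpt {X : Type*} [MetricSpace X] [MeasurableSpace X] (Y : Set X) (p : ℝ)
    (m₁ m₂ : Measure (Option X)) : ℝ≥0∞ :=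
  (⨅ q : Cpl m₁ m₂, ∫⁻ z, ENNReal.ofReal (shortcut Y z.1 z.2 ^ p) ∂q.1) ^ (1/p)

/-- `W''_p(μ,ν) := inf { W_p(μ̌,ν̌) : μ̌,ν̌ finite measures on Y' extending μ,ν }`,
i.e. arbitrary finite mass may be added at `∂` to both measures. -/
noncomputable def Wpp {X : Type*} [MetricSpace X] [MeasurableSpace X] (Y : Set X) (p : ℝ)
    (μ ν : Measure X) : ℝ≥0∞ :=
  ⨅ (a : ℝ≥0) (b : ℝ≥0),
    WOpt Y p (μ.map some + (a : ℝ≥0∞) • Measure.dirac none)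
      (ν.map some + (b : ℝ≥0∞) • Measure.dirac none)

/-!
Both measures are Dirac masses of total mass one, so `toProb` adds nothing at `∂` and the only
coupling for `W'_p` is `δ_{(-2,2)}`: the cost is `d'(-2,2)^p = 2^p`, the detour through `∂` being
no shorter than the direct route. For `W''_p` one may add unit mass at `∂` to both measures and
transport `-2 → ∂` and `∂ → 2` as two separate legs of length `1`, which costs only
`1^p + 1^p = 2 < 2^p`.
-/

section OptionMeasurable

variable {α : Type*} [MeasurableSpace α]

theorem measurable_some : Measurable (some : α → Option α) := by
  rintro s ⟨t, ht, rfl⟩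
  exact measurable_inl ht

instance {β : Type*} [MeasurableSpace β] [MeasurableSingletonClass α]
    [MeasurableSingletonClass β] : MeasurableSingletonClass (α ⊕ β) where
  measurableSet_singleton
    | .inl a => by simpa using (measurableSet_singleton a).inl_image (β := β)
    | .inr b => by simpa using (measurableSet_singleton b).inr_image (α := α)

instance [MeasurableSingletonClass α] : MeasurableSingletonClass (Option α) where
  measurableSet_singleton o :=
    ⟨{Equiv.optionEquivSumPUnit α o}, measurableSet_singleton _, by
      ext; simp [(Equiv.optionEquivSumPUnit α).injective.eq_iff]⟩

theorem toProb_dirac (a : α) : toProb (Measure.dirac a) = Measure.dirac (some a) := by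
  simp [toProb, Measure.map_dirac' measurable_some]

end OptionMeasurable

section DiracCoupling

variable {β : Type*} [MeasurableSpace β] [MeasurableSingletonClass β] {u v : β}

theorem ae_eq_of_mem_Cpl_dirac {q : Measure (β × β)}
    (hq : q ∈ Cpl (Measure.dirac u) (Measure.dirac v)) : ∀ᵐ z ∂q, z = (u, v) := by
  have hfst : ∀ᵐ z ∂q, z.1 = u :=
    ae_of_ae_map measurable_fst.aemeasurable (p := (· = u)) (by rw [hq.1, ae_dirac_eq]; rfl)
  have hsnd : ∀ᵐ z ∂q, z.2 = v :=
    ae_of_ae_map measurable_snd.aemeasurable (p := (· = v)) (by rw [hq.2, ae_dirac_eq]; rfl)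
  filter_upwards [hfst, hsnd] with z h₁ h₂ using Prod.ext h₁ h₂

theorem lintegral_of_mem_Cpl_dirac {q : Measure (β × β)}
    (hq : q ∈ Cpl (Measure.dirac u) (Measure.dirac v)) (f : β × β → ℝ≥0∞) :
    ∫⁻ z, f z ∂q = f (u, v) := by
  have hmass : q univ = 1 := by
    rw [← preimage_univ (f := Prod.fst), ← Measure.map_apply measurable_fst MeasurableSet.univ,
      hq.1, measure_univ]
  rw [lintegral_congr_ae ((ae_eq_of_mem_Cpl_dirac hq).mono fun z hz => congrArg f hz),
    lintegral_const, hmass, mul_one]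

theorem iInf_lintegral_Cpl_dirac (f : β × β → ℝ≥0∞) :
    ⨅ q : Cpl (Measure.dirac u) (Measure.dirac v), ∫⁻ z, f z ∂q.1 = f (u, v) := by
  have hmem : Measure.dirac (u, v) ∈ Cpl (Measure.dirac u) (Measure.dirac v) :=
    ⟨Measure.map_dirac' measurable_fst _, Measure.map_dirac' measurable_snd _⟩
  have : Nonempty (Cpl (Measure.dirac u) (Measure.dirac v)) := ⟨⟨_, hmem⟩⟩
  simp only [fun q : Cpl (Measure.dirac u) (Measure.dirac v) => lintegral_of_mem_Cpl_dirac q.2 f,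
    iInf_const]

end DiracCoupling

theorem Real.infDist_compl_Ioo {a b x : ℝ} (hx : x ∈ Ioo a b) :
    infDist x (Ioo a b)ᶜ = min (x - a) (b - x) := by
  refine le_antisymm (le_min ?_ ?_) ((le_infDist ⟨a, by simp⟩).2 fun y hy => ?_)
  · simpa [Real.dist_eq, abs_of_pos (sub_pos.2 hx.1)] using
      infDist_le_dist_of_mem (x := x) (show a ∈ (Ioo a b)ᶜ by simp)
  · simpa [Real.dist_eq, abs_of_neg (sub_neg.2 hx.2)] using
      infDist_le_dist_of_mem (x := x) (show b ∈ (Ioo a b)ᶜ by simp)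
  · simp only [mem_compl_iff, mem_Ioo, not_and_or, not_lt] at hy
    rw [Real.dist_eq]
    rcases hy with hy | hy
    · exact (min_le_left _ _).trans (le_abs.2 (Or.inl (by linarith)))
    · exact (min_le_right _ _).trans (le_abs.2 (Or.inr (by linarith)))

section Shortcut

variable {X : Type*} [MetricSpace X] (Y : Set X)

theorem shortcut_nonneg : ∀ x y : Option X, 0 ≤ shortcut Y x y
  | some _, some _ => le_min dist_nonneg (add_nonneg infDist_nonneg infDist_nonneg)
  | some _, none | none, some _ => infDist_nonneg
  | none, none => le_rfl

variable [MeasurableSpace X] [MeasurableSingletonClass X]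

theorem Wprime_dirac_dirac {p : ℝ} (hp : 0 < p) (x y : X) :
    Wprime Y p (Measure.dirac x) (Measure.dirac y) =
      ENNReal.ofReal (shortcut Y (some x) (some y)) := by
  rw [Wprime, toProb_dirac, toProb_dirac, iInf_lintegral_Cpl_dirac,
    ← ENNReal.ofReal_rpow_of_nonneg (shortcut_nonneg Y _ _) hp.le, ← ENNReal.rpow_mul,
    mul_one_div_cancel hp.ne', ENNReal.rpow_one]

theorem Wpp_dirac_le {p : ℝ} (hp : 0 ≤ p) (x y : X) :
    Wpp Y p (Measure.dirac x) (Measure.dirac y) ≤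
      (ENNReal.ofReal (shortcut Y (some x) none ^ p) +
        ENNReal.ofReal (shortcut Y none (some y) ^ p)) ^ (1 / p) := by
  let viaBoundary : Measure (Option X × Option X) :=
    Measure.dirac (some x, none) + Measure.dirac (none, some y)
  refine (iInf₂_le 1 1).trans
    (ENNReal.rpow_le_rpow (iInf_le_of_le ⟨viaBoundary, ?_, ?_⟩ ?_) (one_div_nonneg.2 hp))
  · simp [viaBoundary, Measure.map_add _ _ measurable_fst, Measure.map_dirac' measurable_fst,
      Measure.map_dirac' measurable_some]
  · simp [viaBoundary, Measure.map_add _ _ measurable_snd, Measure.map_dirac' measurable_snd,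
      Measure.map_dirac' measurable_some, add_comm]
  · simp [viaBoundary, lintegral_add_measure]

end Shortcut

/-- for `X = ℝ`, `Y = (-3,3)`, `μ = δ_{-2}`, `ν = δ_2`, `p > 1`:
`W'_p(μ,ν)^p = 2^p` while `W''_p(μ,ν)^p ≤ 2`; in particular `W''_p < W'_p`. -/
theorem Wprime_ne_Wpp (p : ℝ) (hp : 1 < p) :
    Wprime (Set.Ioo (-3:ℝ) 3) p (Measure.dirac (-2:ℝ)) (Measure.dirac (2:ℝ)) = 2 ∧
    (Wpp (Set.Ioo (-3:ℝ) 3) p (Measure.dirac (-2:ℝ)) (Measure.dirac (2:ℝ))) ^ p ≤ 2 ∧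
    Wpp (Set.Ioo (-3:ℝ) 3) p (Measure.dirac (-2:ℝ)) (Measure.dirac (2:ℝ)) <
      Wprime (Set.Ioo (-3:ℝ) 3) p (Measure.dirac (-2:ℝ)) (Measure.dirac (2:ℝ)) := by
  have hp₀ : 0 < p := one_pos.trans hp
  have hleft : infDist (-2 : ℝ) (Ioo (-3) 3)ᶜ = 1 := by
    rw [Real.infDist_compl_Ioo (by norm_num)]; norm_num
  have hright : infDist (2 : ℝ) (Ioo (-3) 3)ᶜ = 1 := by
    rw [Real.infDist_compl_Ioo (by norm_num)]; norm_num
  have hWprime : Wprime (Ioo (-3:ℝ) 3) p (Measure.dirac (-2)) (Measure.dirac 2) = 2 := by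
    rw [Wprime_dirac_dirac (Ioo (-3:ℝ) 3) hp₀]
    norm_num [shortcut, hleft, hright, Real.dist_eq]
  have hWpp : Wpp (Ioo (-3:ℝ) 3) p (Measure.dirac (-2)) (Measure.dirac 2) ≤ 2 ^ (1 / p) := by
    simpa [shortcut, hleft, hright, one_add_one_eq_two] using Wpp_dirac_le (Ioo (-3:ℝ) 3) hp₀.le (-2) 2
  refine ⟨hWprime, ?_, ?_⟩
  · calc _ ≤ ((2 : ℝ≥0∞) ^ (1 / p)) ^ p := ENNReal.rpow_le_rpow hWpp hp₀.le
      _ = 2 := by rw [← ENNReal.rpow_mul, one_div_mul_cancel hp₀.ne', ENNReal.rpow_one]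
  · calc _ ≤ (2 : ℝ≥0∞) ^ (1 / p) := hWpp
      _ < 2 ^ (1 : ℝ) := ENNReal.rpow_lt_rpow_of_exponent_lt ENNReal.one_lt_two
        ENNReal.ofNat_ne_top ((div_lt_one hp₀).2 hp)
      _ = _ := by rw [ENNReal.rpow_one, hWprime]
end
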